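/- Theorem 1, part 1 (positivity of the multiplex total distance): For every ω ∈ [0,1], Δ_M(ω) > 0. -/

import Mathlib

open Matrix

/-- The communicability matrix `G(ω) = exp(A + ω·C)` of the multiplex with
inter-layer intensity `ω`. -/
noncomputable def commMat {N : ℕ} (A C : Matrix (Fin N) (Fin N) ℝ) (ω : ℝ) :
    Matrix (Fin N) (Fin N) ℝ :=
  NormedSpace.exp (A + ω • C)

/-- The communicability distance `ξ_{ij}(ω) = G(ω)_{ii} + G(ω)_{jj} - 2 G(ω)_{ij}`. -/
noncomputable def commXi {N : ℕ} (A C : Matrix (Fin N) (Fin N) ℝ) (ω : ℝ) (i j : Fin N) : ℝ :=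
  commMat A C ω i i + commMat A C ω j j - 2 * commMat A C ω i j

/-- The multiplex total distance `Δ_M(ω) = (1/(N-1)) ∑_{i,j} ξ_{ij}(ω)`. -/
noncomputable def totalDist {N : ℕ} (A C : Matrix (Fin N) (Fin N) ℝ) (ω : ℝ) : ℝ :=
  (1 / ((N : ℝ) - 1)) * ∑ i, ∑ j, commXi A C ω i j

/-!
`G(ω)` is the exponential of the symmetric matrix `A + ω C`, so it factors as `Bᵀ B` with
`B = exp((A + ω C)/2)` invertible and is therefore positive definite. Each `ξ_{ij}(ω)` is the
quadratic form of `G(ω)` at `e_i - e_j`: it is nonnegative, and positive as soon as `i ≠ j`,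
which happens for some pair because `N ≥ 2`.
-/

namespace Matrix

variable {n 𝕜 : Type*} [Fintype n] [DecidableEq n]

open scoped ComplexOrder in
theorem IsHermitian.posDef_exp [RCLike 𝕜] {A : Matrix n n 𝕜} (hA : A.IsHermitian) :
    (NormedSpace.exp A).PosDef := by
  set B := NormedSpace.exp ((2⁻¹ : ℝ) • A)
  have hB : Bᴴ = B := (hA.smul (IsSelfAdjoint.all _)).exp
  have hBB : NormedSpace.exp A = Bᴴ * B := by
    rw [hB, ← exp_add_of_commute _ _ (Commute.refl _), ← two_smul ℝ, smul_smul]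
    norm_num
  rw [hBB]
  exact PosDef.conjTranspose_mul_self B (mulVec_injective_iff_isUnit.2 (isUnit_exp _))

theorem IsSymm.single_sub_single_dotProduct_mulVec {R : Type*} [CommRing R] {G : Matrix n n R}
    (hG : G.IsSymm) (i j : n) :
    (Pi.single i 1 - Pi.single j 1) ⬝ᵥ G *ᵥ (Pi.single i 1 - Pi.single j 1)
      = G i i + G j j - 2 * G i j := by
  have hji : G j i = G i j := hG.apply i j
  simp [dotProduct_sub, sub_dotProduct, mulVec_sub, mulVec_single, single_dotProduct, hji]
  ring

variable {R : Type*} [CommRing R] [PartialOrder R] [StarRing R] [TrivialStar R] {G : Matrix n n R}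

theorem PosSemidef.diag_add_diag_sub_two_mul_nonneg (hG : G.PosSemidef) (i j : n) :
    0 ≤ G i i + G j j - 2 * G i j := by
  rw [← (isHermitian_iff_isSymm.1 hG.isHermitian).single_sub_single_dotProduct_mulVec]
  simpa only [star_trivial] using hG.dotProduct_mulVec_nonneg (Pi.single i 1 - Pi.single j 1)

theorem PosDef.diag_add_diag_sub_two_mul_pos [Nontrivial R] (hG : G.PosDef) {i j : n}
    (hij : i ≠ j) :
    0 < G i i + G j j - 2 * G i j := by
  rw [← (isHermitian_iff_isSymm.1 hG.isHermitian).single_sub_single_dotProduct_mulVec]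
  have hv : (Pi.single i 1 - Pi.single j 1 : n → R) ≠ 0 :=
    fun h => by simpa [hij] using congrFun h i
  simpa only [star_trivial] using hG.dotProduct_mulVec_pos hv

end Matrix

/-- Theorem 1, part 1: the multiplex total distance is positive on `[0,1]`. -/
theorem totalDist_pos {N : ℕ} (hN : 2 ≤ N) (A C : Matrix (Fin N) (Fin N) ℝ)
    (hA : Aᵀ = A) (hC : Cᵀ = C) :
    ∀ ω ∈ Set.Icc (0 : ℝ) 1, 0 < totalDist A C ω := by
  intro ω _
  have hG : (commMat A C ω).PosDef := IsHermitian.posDef_exp (by simp [IsHermitian, hA, hC])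
  have : Nontrivial (Fin N) := Fin.nontrivial_iff_two_le.2 hN
  obtain ⟨i, j, hij⟩ := exists_pair_ne (Fin N)
  have hξ : ∀ k l, 0 ≤ commXi A C ω k l := hG.posSemidef.diag_add_diag_sub_two_mul_nonneg
  have hsum : 0 < ∑ k, ∑ l, commXi A C ω k l :=
    Finset.sum_pos' (fun k _ => Finset.sum_nonneg fun l _ => hξ k l)
      ⟨i, Finset.mem_univ _, Finset.sum_pos' (fun l _ => hξ i l)
        ⟨j, Finset.mem_univ _, hG.diag_add_diag_sub_two_mul_pos hij⟩⟩
  have hN' : (0 : ℝ) < N - 1 := by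
    have : (2 : ℝ) ≤ N := by exact_mod_cast hN
    linarith
  exact mul_pos (one_div_pos.2 hN') hsum
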